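/- arXiv:2103.01751 — 9 statements merged into one kernel-verified Lean document; each statement's English description precedes it below -/
import Mathlib

section
/- Let (a_t)_{t≥1} be a sequence of real numbers satisfying the recursive relation a_{t+1} = (1 − b_t/t)·a_t + c_t for all t ≥ 1, where (b_t) and (c_t) are real sequences with b_t → b for some b > 0 and c_t → c as t → ∞. Then the limit of a_t/t as t → ∞ exists and equals c/(1+b). -/
open Filter

/-- Chung–Lu, Lemma 3.3. If a real sequence `a` satisfies the recursion
`a (t+1) = (1 - b t / t) * a t + c t` for all `t ≥ 1`, where `b t → bb > 0` and `c t → cc`,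
then `a t / t → cc / (1 + bb)`. -/
theorem recursive_sequence_limit (a b c : ℕ → ℝ) (bb cc : ℝ) (hbb : 0 < bb)
    (hrec : ∀ t : ℕ, 1 ≤ t → a (t + 1) = (1 - b t / (t : ℝ)) * a t + c t)
    (hb : Filter.Tendsto b Filter.atTop (nhds bb))
    (hc : Filter.Tendsto c Filter.atTop (nhds cc)) :
    Filter.Tendsto (fun t : ℕ => a t / (t : ℝ)) Filter.atTop (nhds (cc / (1 + bb))) := by
  set L := cc / (1 + bb) with hL
  have h1bb : (0:ℝ) < 1 + bb := by linarith
  have hLcc : L * (1 + bb) = cc := div_mul_cancel₀ _ (ne_of_gt h1bb)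
  set x : ℕ → ℝ := fun t => a t / t with hx
  set d : ℕ → ℝ := fun t => c t - L * (1 + b t) with hd
  have hdlim : Tendsto d atTop (nhds 0) := by
    have : Tendsto (fun t => c t - L * (1 + b t)) atTop (nhds (cc - L * (1 + bb))) :=
      hc.sub (tendsto_const_nhds.mul (tendsto_const_nhds.add hb))
    simpa [hLcc] using this
  have key : ∀ t : ℕ, 1 ≤ t → x (t+1) - L = (((t:ℝ) - b t) * (x t - L) + d t) / ((t:ℝ)+1) := by
    intro t ht
    have ht0 : (t:ℝ) ≠ 0 := Nat.cast_ne_zero.mpr (by omega)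
    have ht1 : (t:ℝ) + 1 ≠ 0 := by positivity
    simp only [hx, hd]
    rw [hrec t ht]
    push_cast
    field_simp
    ring
  rw [Metric.tendsto_atTop]
  intro ε hε
  set ε' := ε / 2 with hε'
  have hε'0 : 0 < ε' := by positivity
  have e1 : ∀ᶠ t in atTop, 0 < b t := hb.eventually (eventually_gt_nhds hbb)
  have e2 : ∀ᶠ t in atTop, b t < bb + 1 := hb.eventually (eventually_lt_nhds (by linarith))
  have e3 : ∀ᶠ t : ℕ in atTop, bb + 1 ≤ (t:ℝ) :=
    tendsto_natCast_atTop_atTop.eventually_ge_atTop _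
  have e4 : ∀ᶠ t in atTop, |d t| ≤ ε' := by
    have := Metric.tendsto_nhds.mp hdlim ε' hε'0
    filter_upwards [this] with t ht
    simpa [Real.dist_eq] using ht.le
  have e5 : ∀ᶠ t : ℕ in atTop, 1 ≤ t := eventually_ge_atTop 1
  obtain ⟨T, hT⟩ := Filter.eventually_atTop.mp ((((e1.and e2).and (e3.and e4)).and e5))
  have cond : ∀ t, T ≤ t → 0 < b t ∧ b t ≤ (t:ℝ) ∧ |d t| ≤ ε' ∧ 1 ≤ t := by
    intro t ht
    obtain ⟨⟨⟨hb1, hb2⟩, hb3, hb4⟩, hb5⟩ := hT t ht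
    exact ⟨hb1, by linarith, hb4, hb5⟩
  have mono : ∀ t, T ≤ t →
      (t:ℝ) * max (|x t - L| - ε') 0 ≤ (T:ℝ) * max (|x T - L| - ε') 0 := by
    intro t ht
    induction t, ht using Nat.le_induction with
    | base => exact le_rfl
    | succ t ht ih =>
      obtain ⟨hbt0, hbtt, hdt, h1t⟩ := cond t ht
      have ht1pos : (0:ℝ) < (t:ℝ) + 1 := by positivity
      refine le_trans ?_ ih
      have hy : |x (t+1) - L| ≤ (((t:ℝ) - b t) * |x t - L| + ε') / ((t:ℝ)+1) := by
        rw [key t h1t, abs_div, abs_of_pos ht1pos]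
        gcongr
        calc |((t:ℝ) - b t) * (x t - L) + d t|
            ≤ |((t:ℝ) - b t) * (x t - L)| + |d t| := abs_add_le _ _
          _ = ((t:ℝ) - b t) * |x t - L| + |d t| := by
              rw [abs_mul, abs_of_nonneg (by linarith)]
          _ ≤ ((t:ℝ) - b t) * |x t - L| + ε' := by linarith
      have hm : ((t:ℝ)+1) * |x (t+1) - L| ≤ ((t:ℝ) - b t) * |x t - L| + ε' := by
        have := (le_div_iff₀ ht1pos).mp hy
        linarith
      set P := max (|x t - L| - ε') 0 with hP
      have hP0 : (0:ℝ) ≤ P := le_max_right _ _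
      have hP1 : |x t - L| - ε' ≤ P := le_max_left _ _
      have hA : ((t:ℝ) - b t) * (|x t - L| - ε') ≤ ((t:ℝ) - b t) * P :=
        mul_le_mul_of_nonneg_left hP1 (by linarith)
      have hB : (0:ℝ) ≤ b t * P := mul_nonneg hbt0.le hP0
      have hC : (0:ℝ) ≤ b t * ε' := mul_nonneg hbt0.le hε'0.le
      have h2 : ((t:ℝ)+1) * (|x (t+1) - L| - ε') ≤ (t:ℝ) * P := by nlinarith
      push_cast
      rcases le_total (|x (t+1) - L| - ε') 0 with h | h
      · rw [max_eq_right h]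
        simpa using mul_nonneg (Nat.cast_nonneg t) hP0
      · rw [max_eq_left h]
        exact h2
  set C := (T:ℝ) * max (|x T - L| - ε') 0 with hC
  have hC0 : 0 ≤ C := mul_nonneg (Nat.cast_nonneg T) (le_max_right _ _)
  set N := max T (Nat.ceil (C / ε') + 1) with hN
  refine ⟨N, fun n hn => ?_⟩
  have hnT : T ≤ n := le_trans (le_max_left _ _) hn
  have hnc : Nat.ceil (C / ε') + 1 ≤ n := le_trans (le_max_right _ _) hn
  have hngt : C / ε' < (n:ℝ) := by
    calc C / ε' ≤ (Nat.ceil (C / ε') : ℝ) := Nat.le_ceil _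
      _ < (n:ℝ) := by exact_mod_cast Nat.lt_of_lt_of_le (Nat.lt_succ_self _) hnc
  have hn0 : (0:ℝ) < (n:ℝ) := lt_of_le_of_lt (by positivity) hngt
  have hCn : C < ε' * n := by
    rw [div_lt_iff₀ hε'0] at hngt
    linarith [hngt]
  have hmn := mono n hnT
  have hmax : max (|x n - L| - ε') 0 < ε' := by
    by_contra hcon
    push_neg at hcon
    have : (n:ℝ) * ε' ≤ (n:ℝ) * max (|x n - L| - ε') 0 :=
      mul_le_mul_of_nonneg_left hcon (le_of_lt hn0)
    nlinarith
  have : |x n - L| - ε' < ε' := lt_of_le_of_lt (le_max_left _ _) hmax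
  rw [Real.dist_eq]
  calc |x n - L| < ε' + ε' := by linarith
    _ = ε := by rw [hε']; ring
end

section
/- For each integer t ≥ 1 let N_t and V_t be random variables on a common probability space such that 0 ≤ N_t ≤ min(V_t, t) almost surely and V_t = 1 + B_t where B_t has the binomial distribution B(t,q) for a fixed q ∈ (0,1]. If lim_{t→∞} E[N_t]/t = L for some real L, then lim_{t→∞} E[N_t/V_t] = L/q. -/
/-!
With `c = q (t + 1) = E[V t]`, the ratio `N t / V t` lies in `[0, 1]`, so pointwise
`|N t / V t - N t / c| ≤ |V t - c| / c`. By Jensen's inequality and the binomial variance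
`t q (1 - q)`, `E |V t - c| ≤ √t + 1`, hence
`E[N t / V t] = E[N t] / (q (t + 1)) + O(1 / √t)`, and the main term tends to `L / q`.
-/

open MeasureTheory ProbabilityTheory Filter Topology
open scoped unitInterval

section

variable {Ω : Type*} {m : MeasurableSpace Ω} {P : Measure Ω}

namespace ProbabilityTheory

lemma hasLaw_binomial_of_measure_eq {X : Ω → ℕ} (hX : Measurable X) {n : ℕ} {p : I}
    (h : ∀ k, P {ω | X ω = k} = ENNReal.ofReal (n.choose k * p ^ k * (1 - p) ^ (n - k))) :
    HasLaw X Bin(n, p) P where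
  aemeasurable := hX.aemeasurable
  map_eq := Measure.ext_of_singleton fun k => by
    rw [Measure.map_apply hX (measurableSet_singleton k), binomial_singleton, ← h k]
    rfl

lemma integrable_comp_of_hasLaw_binomial {E : Type*} [NormedAddCommGroup E] {X : Ω → ℕ}
    {n : ℕ} {p : I} (hX : HasLaw X Bin(n, p) P) (f : ℕ → E) : Integrable (fun ω => f (X ω)) P :=
  (integrable_map_measure .of_discrete hX.aemeasurable).1 (hX.map_eq ▸ integrable_binomial f)

lemma integral_sq_sub_binomial (n : ℕ) (p : I) :
    ∫ k, ((k : ℝ) - n * p) ^ 2 ∂Bin(n, p) = n * p * (1 - p) := by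
  have h := congrArg (Polynomial.eval (p : ℝ)) (bernsteinPolynomial.variance ℝ n)
  rw [integral_binomial, ← Nat.range_succ_eq_Iic]
  simpa [bernsteinPolynomial, Polynomial.eval_finsetSum, sub_sq_comm, mul_comm, mul_assoc,
    mul_left_comm] using h

lemma integral_abs_sub_binomial_le (n : ℕ) (p : I) :
    ∫ k, |(k : ℝ) - n * p| ∂Bin(n, p) ≤ √(n * p * (1 - p)) := by
  have jensen :
      (∫ k, |(k : ℝ) - n * p| ∂Bin(n, p)) ^ 2 ≤ ∫ k, |(k : ℝ) - n * p| ^ 2 ∂Bin(n, p) :=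
    (Even.convexOn_pow even_two).map_integral_le (continuous_pow 2).continuousOn isClosed_univ
      (by simp) (integrable_binomial _) (integrable_binomial _)
  simp only [sq_abs, integral_sq_sub_binomial] at jensen
  exact Real.le_sqrt_of_sq_le jensen

lemma integral_abs_add_one_sub_binomial_le (n : ℕ) (p : I) :
    ∫ k, |(k : ℝ) + 1 - (n + 1) * p| ∂Bin(n, p) ≤ √n + 1 := by
  calc ∫ k, |(k : ℝ) + 1 - (n + 1) * p| ∂Bin(n, p)
      ≤ ∫ k, (|(k : ℝ) - n * p| + 1) ∂Bin(n, p) := by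
        refine integral_mono (integrable_binomial _) (integrable_binomial _) fun k => ?_
        rw [show (k : ℝ) + 1 - (n + 1) * p = k - n * p + (1 - p) by ring]
        grw [abs_add_le, abs_of_nonneg (sub_nonneg.2 p.2.2)]
        linarith [p.2.1]
    _ = ∫ k, |(k : ℝ) - n * p| ∂Bin(n, p) + 1 := by
        rw [integral_add (integrable_binomial _) (integrable_const 1)]
        simp
    _ ≤ √(n * p * (1 - p)) + 1 := by grw [integral_abs_sub_binomial_le]
    _ ≤ √n + 1 := by
        have : (p : ℝ) * (1 - p) ≤ 1 := by nlinarith [p.2.1, p.2.2]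
        gcongr
        nlinarith [(Nat.cast_nonneg n : (0 : ℝ) ≤ n)]

end ProbabilityTheory

lemma abs_integral_div_sub_integral_div_le [IsFiniteMeasure P] {X Y : Ω → ℝ} {c : ℝ}
    (hc : 0 < c) (hX : AEStronglyMeasurable X P) (hY : Integrable Y P) (hYpos : ∀ᵐ ω ∂P, 0 < Y ω)
    (hXY : ∀ᵐ ω ∂P, 0 ≤ X ω ∧ X ω ≤ Y ω) :
    |∫ ω, X ω / Y ω ∂P - (∫ ω, X ω ∂P) / c| ≤ (∫ ω, |Y ω - c| ∂P) / c := by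
  have hXint : Integrable X P := hY.mono' hX <| by
    filter_upwards [hXY] with ω hω
    rw [Real.norm_eq_abs, abs_of_nonneg hω.1]
    exact hω.2
  have hratio : ∀ᵐ ω ∂P, 0 ≤ X ω / Y ω ∧ X ω / Y ω ≤ 1 := by
    filter_upwards [hXY, hYpos] with ω hω hYω
    exact ⟨div_nonneg hω.1 hYω.le, (div_le_one hYω).2 hω.2⟩
  have hratio_int : Integrable (fun ω => X ω / Y ω) P :=
    (integrable_const 1).mono' (hX.div₀ hY.1) <| by
      filter_upwards [hratio] with ω hω
      rw [Real.norm_eq_abs, abs_of_nonneg hω.1]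
      exact hω.2
  have hpointwise : ∀ᵐ ω ∂P, ‖X ω / Y ω - X ω / c‖ ≤ |Y ω - c| / c := by
    filter_upwards [hratio, hYpos] with ω hω hYω
    have : X ω / Y ω - X ω / c = X ω / Y ω * ((c - Y ω) / c) := by
      field_simp
    rw [Real.norm_eq_abs, this, abs_mul, abs_of_nonneg hω.1, abs_div, abs_of_pos hc, abs_sub_comm]
    exact mul_le_of_le_one_left (by positivity) hω.2
  rw [← integral_div, ← integral_sub hratio_int (hXint.div_const c), ← Real.norm_eq_abs,
    ← integral_div]
  exact norm_integral_le_of_norm_le ((hY.sub (integrable_const c)).abs.div_const c) hpointwise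

end

lemma Filter.Tendsto.div_mul_add_one {a : ℕ → ℝ} {L : ℝ}
    (h : Tendsto (fun t => a t / t) atTop (𝓝 L)) (q : ℝ) :
    Tendsto (fun t : ℕ => a t / (q * (t + 1))) atTop (𝓝 (L / q)) := by
  have := (h.mul (tendsto_natCast_div_add_atTop (1 : ℝ))).div_const q
  rw [mul_one] at this
  refine this.congr' ?_
  filter_upwards [eventually_ne_atTop 0] with t ht
  field_simp

lemma tendsto_sqrt_add_one_div_add_one :
    Tendsto (fun t : ℕ => (√t + 1) / (t + 1)) atTop (𝓝 0) := by
  have hsqrt : Tendsto (fun t : ℕ => √t + 1) atTop atTop :=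
    tendsto_atTop_add_const_right _ 1 (Real.tendsto_sqrt_atTop.comp tendsto_natCast_atTop_atTop)
  refine squeeze_zero (fun t => by positivity) (fun t => ?_)
    ((tendsto_const_nhds (x := (2 : ℝ))).div_atTop hsqrt)
  rw [div_le_div_iff₀ (by positivity) (by positivity)]
  nlinarith [Real.sq_sqrt (Nat.cast_nonneg (α := ℝ) t), sq_nonneg (√t - 1)]

/-- For each `t ≥ 1` let `N t` and `V t` be random variables with
`0 ≤ N t ≤ min (V t) t` almost surely, where `V t = 1 + B t` and `B t ~ B(t, q)` for a fixed
`q ∈ (0,1]`. If `E[N t] / t → L`, then `E[N t / V t] → L / q`. -/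
theorem expectation_ratio_limit {Ω : Type*} [MeasureSpace Ω]
    [IsProbabilityMeasure (ℙ : Measure Ω)]
    (q : ℝ) (hq0 : 0 < q) (hq1 : q ≤ 1)
    (N : ℕ → Ω → ℝ) (B : ℕ → Ω → ℕ) (V : ℕ → Ω → ℕ)
    (hN : ∀ t, Measurable (N t)) (hB : ∀ t, Measurable (B t))
    (hV : ∀ t ω, V t ω = 1 + B t ω)
    (hlaw : ∀ t k : ℕ,
      ℙ {ω | B t ω = k} = ENNReal.ofReal ((t.choose k : ℝ) * q ^ k * (1 - q) ^ (t - k)))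
    (hbound : ∀ t : ℕ, 1 ≤ t →
      ∀ᵐ ω ∂(ℙ : Measure Ω), 0 ≤ N t ω ∧ N t ω ≤ min ((V t ω : ℝ)) (t : ℝ))
    (L : ℝ)
    (hlim : Filter.Tendsto (fun t : ℕ => (∫ ω, N t ω) / (t : ℝ)) Filter.atTop (nhds L)) :
    Filter.Tendsto (fun t : ℕ => ∫ ω, N t ω / (V t ω : ℝ)) Filter.atTop (nhds (L / q)) := by
  set p : I := ⟨q, hq0.le, hq1⟩
  obtain rfl : V = fun t ω => 1 + B t ω := funext₂ hV
  have hBlaw (t : ℕ) : HasLaw (B t) Bin(t, p) := hasLaw_binomial_of_measure_eq (hB t) (hlaw t)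
  have hmain : Tendsto (fun t : ℕ => (∫ ω, N t ω) / (q * (t + 1))) atTop (𝓝 (L / q)) :=
    hlim.div_mul_add_one q
  have herror : ∀ᶠ t : ℕ in atTop,
      dist ((∫ ω, N t ω) / (q * (t + 1))) (∫ ω, N t ω / ((1 + B t ω : ℕ) : ℝ))
        ≤ (√t + 1) / (t + 1) / q := by
    filter_upwards [eventually_ge_atTop 1] with t ht
    rw [dist_comm, Real.dist_eq, div_div, mul_comm _ q]
    calc _ ≤ (∫ ω, |((1 + B t ω : ℕ) : ℝ) - q * (t + 1)|) / (q * (t + 1)) :=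
          abs_integral_div_sub_integral_div_le (by positivity) (hN t).aestronglyMeasurable
            (integrable_comp_of_hasLaw_binomial (hBlaw t) fun k => ((1 + k : ℕ) : ℝ))
            (.of_forall fun ω => by positivity)
            ((hbound t ht).mono fun ω hω => ⟨hω.1, hω.2.trans (min_le_left _ _)⟩)
      _ = (∫ k, |(k : ℝ) + 1 - (t + 1) * p| ∂Bin(t, p)) / (q * (t + 1)) := by
          rw [← (hBlaw t).integral_comp .of_discrete]
          congr! 3 with ω
          change _ = |((B t ω : ℕ) : ℝ) + 1 - (t + 1) * q|
          push_cast
          ring_nf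
      _ ≤ (√t + 1) / (q * (t + 1)) := by grw [integral_abs_add_one_sub_binomial_le]
  exact hmain.congr_dist <| squeeze_zero' (.of_forall fun _ => dist_nonneg) herror <| by
    simpa using tendsto_sqrt_add_one_div_add_one.div_const q
end

section
/- Let Z be a random variable taking values in the positive integers with 1 ≤ Z ≤ B almost surely for some real B ≥ 1 and with E[Z] = μ. Let m ≥ 1 be an integer and let x, w be real numbers with w ≥ 1 and 0 ≤ x ≤ w. Then 1 − mμx/w ≤ E[(1 − x/w)^{mZ}] ≤ 1 − mμx/w + B²·(mx)²/w². -/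
open MeasureTheory
open scoped ProbabilityTheory

lemma pow_ub_aux (u : ℝ) (hu0 : 0 ≤ u) (hu1 : u ≤ 1) (n : ℕ) :
    (1 - u) ^ n ≤ 1 - n * u + (n * u) ^ 2 := by
  have hnu : (0:ℝ) ≤ n * u := by positivity
  have h1 : (1:ℝ) + n * u ≤ (1 + u) ^ n := by
    have := one_add_mul_le_pow (by linarith : (-2:ℝ) ≤ u) n
    linarith
  have h0 : (0:ℝ) ≤ (1 - u) ^ n := pow_nonneg (by linarith) n
  have h2 : (1 - u) ^ n * (1 + u) ^ n ≤ 1 := by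
    rw [← mul_pow]
    exact pow_le_one₀ (by nlinarith) (by nlinarith)
  have h3 : (1 - u) ^ n * (1 + n * u) ≤ 1 :=
    le_trans (mul_le_mul_of_nonneg_left h1 h0) h2
  nlinarith [mul_nonneg hnu (mul_nonneg hnu hnu)]

lemma pow_lb_aux (u : ℝ) (hu1 : u ≤ 1) (n : ℕ) :
    1 - n * u ≤ (1 - u) ^ n := by
  have := one_add_mul_le_pow (by linarith : (-2:ℝ) ≤ -u) n
  calc 1 - (n:ℝ) * u = 1 + n * (-u) := by ring
    _ ≤ (1 + -u) ^ n := this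
    _ = (1 - u) ^ n := by ring_nf

/-- Let `Z` be a positive-integer-valued random variable with
`1 ≤ Z ≤ B` a.s. (`B ≥ 1` real) and `E[Z] = μ`. For an integer `m ≥ 1` and reals
`x, w` with `w ≥ 1` and `0 ≤ x ≤ w`,
`1 − mμx/w ≤ E[(1 − x/w)^{mZ}] ≤ 1 − mμx/w + B²(mx)²/w²`. -/
theorem expectation_power_bounds {Ω : Type*} [MeasureSpace Ω]
    [IsProbabilityMeasure (ℙ : Measure Ω)]
    (Z : Ω → ℕ) (hZmeas : Measurable Z) (B : ℝ) (hB : 1 ≤ B)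
    (hbdd : ∀ᵐ ω ∂(ℙ : Measure Ω), 1 ≤ Z ω ∧ (Z ω : ℝ) ≤ B)
    (μ : ℝ) (hμ : (∫ ω, (Z ω : ℝ)) = μ)
    (m : ℕ) (hm : 1 ≤ m) (x w : ℝ) (hw : 1 ≤ w) (hx0 : 0 ≤ x) (hxw : x ≤ w) :
    1 - (m : ℝ) * μ * x / w ≤ (∫ ω, (1 - x / w) ^ (m * Z ω)) ∧
      (∫ ω, (1 - x / w) ^ (m * Z ω))
        ≤ 1 - (m : ℝ) * μ * x / w + B ^ 2 * ((m : ℝ) * x) ^ 2 / w ^ 2 := by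
  have hw0 : (0:ℝ) < w := by linarith
  set u := x / w with hu
  have hu0 : 0 ≤ u := by positivity
  have hu1 : u ≤ 1 := by rw [hu, div_le_one hw0]; exact hxw
  -- measurability
  have hZsm : AEStronglyMeasurable (fun ω => (Z ω : ℝ)) ℙ :=
    (measurable_from_top.comp hZmeas).aestronglyMeasurable
  have hfsm : AEStronglyMeasurable (fun ω => (1 - u) ^ (m * Z ω)) ℙ :=
    ((measurable_from_top (f := fun n : ℕ => (1 - u) ^ (m * n))).comp
      hZmeas).aestronglyMeasurable
  -- integrability
  have hZint : Integrable (fun ω => (Z ω : ℝ)) := by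
    refine (integrable_const B).mono' hZsm ?_
    filter_upwards [hbdd] with ω h
    rw [Real.norm_eq_abs, abs_of_nonneg (by positivity)]
    exact h.2
  have hfint : Integrable (fun ω => (1 - u) ^ (m * Z ω)) := by
    refine (integrable_const (1:ℝ)).mono' hfsm ?_
    refine Filter.Eventually.of_forall fun ω => ?_
    rw [Real.norm_eq_abs, abs_of_nonneg (pow_nonneg (by linarith) _)]
    exact pow_le_one₀ (by linarith) (by linarith)
  have hglint : Integrable (fun ω => 1 - (m:ℝ) * Z ω * u) :=
    (integrable_const 1).sub (((hZint.const_mul m)).mul_const u)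
  have hguint : Integrable (fun ω => 1 - (m:ℝ) * Z ω * u + ((m:ℝ) * u) ^ 2 * B ^ 2) :=
    hglint.add (integrable_const _)
  -- integral of the linear part
  have hmul : ∫ ω, (m:ℝ) * Z ω * u = (m:ℝ) * μ * u := by
    have : (fun ω => (m:ℝ) * Z ω * u) = fun ω => ((m:ℝ) * u) * Z ω := by
      ext ω; ring
    rw [this, integral_const_mul, hμ]; ring
  have hgl : ∫ ω, (1 - (m:ℝ) * Z ω * u) = 1 - (m:ℝ) * μ * u := by
    rw [integral_sub (integrable_const 1) ((hZint.const_mul m).mul_const u), hmul]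
    simp
  have hgu : ∫ ω, (1 - (m:ℝ) * Z ω * u + ((m:ℝ) * u) ^ 2 * B ^ 2)
      = 1 - (m:ℝ) * μ * u + ((m:ℝ) * u) ^ 2 * B ^ 2 := by
    rw [integral_add hglint (integrable_const _), hgl]
    simp
  have hcast : ∀ ω, ((m * Z ω : ℕ) : ℝ) = (m:ℝ) * Z ω := by
    intro ω; push_cast; ring
  constructor
  · have hle : ∀ᵐ ω ∂(ℙ : Measure Ω),
        (1 - (m:ℝ) * Z ω * u) ≤ (1 - u) ^ (m * Z ω) := by
      refine Filter.Eventually.of_forall fun ω => ?_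
      have := pow_lb_aux u hu1 (m * Z ω)
      rw [hcast ω] at this
      linarith
    have := integral_mono_ae hglint hfint hle
    rw [hgl] at this
    calc 1 - (m:ℝ) * μ * x / w = 1 - (m:ℝ) * μ * u := by rw [hu]; ring
      _ ≤ _ := this
  · have hle : ∀ᵐ ω ∂(ℙ : Measure Ω),
        (1 - u) ^ (m * Z ω) ≤ 1 - (m:ℝ) * Z ω * u + ((m:ℝ) * u) ^ 2 * B ^ 2 := by
      filter_upwards [hbdd] with ω hω
      have h1 := pow_ub_aux u hu0 hu1 (m * Z ω)
      rw [hcast ω] at h1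
      have hZ1 : (1:ℝ) ≤ Z ω := by exact_mod_cast hω.1
      have hZB : (Z ω : ℝ) ≤ B := hω.2
      have h2 : (Z ω : ℝ) ^ 2 ≤ B ^ 2 := by nlinarith
      have hkey : ((m:ℝ) * Z ω * u) ^ 2 ≤ ((m:ℝ) * u) ^ 2 * B ^ 2 := by
        nlinarith [mul_le_mul_of_nonneg_left h2 (sq_nonneg ((m:ℝ) * u))]
      linarith
    have := integral_mono_ae hfint hguint hle
    rw [hgu] at this
    calc (∫ ω, (1 - u) ^ (m * Z ω))
        ≤ 1 - (m:ℝ) * μ * u + ((m:ℝ) * u) ^ 2 * B ^ 2 := this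
      _ = 1 - (m:ℝ) * μ * x / w + B ^ 2 * ((m:ℝ) * x) ^ 2 / w ^ 2 := by
          rw [hu]; ring
end

section
/- Let D > 0 and γ > 0 be real numbers, let p_v, p_ve ≥ 0 be reals, and let m ≥ 1 be an integer. Define the sequence (L_k)_{k≥0} by L_0 = p_v·D/(γ+D) and, for k ≥ 1, L_k = (L_{k−1}·(k−1+γ) + δ_{k,m}·p_ve·D)/(k+γ+D), where δ_{k,m} equals 1 if k = m and 0 otherwise. Then for every integer k ≥ m, L_k = ( (p_v·D/(γ+D)) · (Γ(m+γ)/Γ(γ)) · (Γ(γ+D+1)/Γ(m+γ+D+1)) + p_ve·D/(m+γ+D) ) · (Γ(m+γ+D+1)/Γ(m+γ)) · (Γ(k+γ)/Γ(k+γ+D+1)). -/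
/-- For the sequence `L` defined by `L 0 = p_v·D/(γ+D)` and, for `k ≥ 1`,
`L k = (L (k−1)·(k−1+γ) + δ_{k,m}·p_ve·D)/(k+γ+D)` (with `D > 0`, `γ > 0`, `m ≥ 1`),
one has, for every `k ≥ m`,
`L k = (p_v·D/(γ+D) · Γ(m+γ)/Γ(γ) · Γ(γ+D+1)/Γ(m+γ+D+1) + p_ve·D/(m+γ+D))
        · Γ(m+γ+D+1)/Γ(m+γ) · Γ(k+γ)/Γ(k+γ+D+1)`. -/
theorem Lk_closed_form_above_m (D γ pv pve : ℝ) (hD : 0 < D) (hγ : 0 < γ)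
    (hpv : 0 ≤ pv) (hpve : 0 ≤ pve) (m : ℕ) (hm : 1 ≤ m)
    (L : ℕ → ℝ) (hL0 : L 0 = pv * D / (γ + D))
    (hLk : ∀ k : ℕ, L (k + 1) =
      (L k * ((k : ℝ) + γ) + (if k + 1 = m then (1 : ℝ) else 0) * pve * D)
        / (((k : ℝ) + 1) + γ + D)) :
    ∀ k : ℕ, m ≤ k →
      L k = (pv * D / (γ + D) * (Real.Gamma ((m : ℝ) + γ) / Real.Gamma γ)
              * (Real.Gamma (γ + D + 1) / Real.Gamma ((m : ℝ) + γ + D + 1))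
            + pve * D / ((m : ℝ) + γ + D))
          * (Real.Gamma ((m : ℝ) + γ + D + 1) / Real.Gamma ((m : ℝ) + γ))
          * (Real.Gamma ((k : ℝ) + γ) / Real.Gamma ((k : ℝ) + γ + D + 1)) := by
  have hΓ : ∀ x : ℝ, 0 < x → 0 < Real.Gamma x := fun x hx => Real.Gamma_pos_of_pos hx
  -- Gamma recurrences, stated at a general positive point
  have hrec : ∀ x : ℝ, 0 < x → Real.Gamma (x + 1) = x * Real.Gamma x :=
    fun x hx => Real.Gamma_add_one hx.ne'
  -- values below m
  have below : ∀ k : ℕ, k < m → L k =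
      pv * D / (γ + D) * (Real.Gamma (γ + D + 1) / Real.Gamma γ)
        * (Real.Gamma ((k : ℝ) + γ) / Real.Gamma ((k : ℝ) + γ + D + 1)) := by
    intro k
    induction k with
    | zero =>
      intro _
      rw [hL0]
      push_cast
      have h1 := (hΓ γ hγ).ne'
      have h2 := (hΓ (γ + D + 1) (by positivity)).ne'
      field_simp
      ring
    | succ k ih =>
      intro hk
      have hkm : k < m := Nat.lt_of_succ_lt hk
      have hne : ¬ (k + 1 = m) := Nat.ne_of_lt hk
      rw [hLk k, if_neg hne, ih hkm]
      push_cast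
      have g1 : Real.Gamma ((k : ℝ) + 1 + γ) = ((k : ℝ) + γ) * Real.Gamma ((k : ℝ) + γ) := by
        rw [show ((k : ℝ) + 1 + γ) = ((k : ℝ) + γ) + 1 from by ring, hrec _ (by positivity)]
      have g2 : Real.Gamma ((k : ℝ) + 1 + γ + D + 1)
          = ((k : ℝ) + γ + D + 1) * Real.Gamma ((k : ℝ) + γ + D + 1) := by
        rw [show ((k : ℝ) + 1 + γ + D + 1) = ((k : ℝ) + γ + D + 1) + 1 from by ring,
          hrec _ (by positivity)]
      rw [g1, g2]
      have h1 := (hΓ γ hγ).ne'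
      have h2 := (hΓ (γ + D + 1) (by positivity)).ne'
      have h3 := (hΓ ((k : ℝ) + γ) (by positivity)).ne'
      have h4 := (hΓ ((k : ℝ) + γ + D + 1) (by positivity)).ne'
      have h5 : γ + D ≠ 0 := by positivity
      have h6 : (k : ℝ) + γ + D + 1 ≠ 0 := by positivity
      field_simp
      ring
  -- main induction
  intro k hk
  induction k, hk using Nat.le_induction with
  | base =>
    obtain ⟨n, rfl⟩ : ∃ n, m = n + 1 := ⟨m - 1, (Nat.succ_pred_eq_of_pos hm).symm⟩
    rw [hLk n, if_pos rfl, below n (Nat.lt_succ_self n)]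
    push_cast
    have g1 : Real.Gamma ((n : ℝ) + 1 + γ) = ((n : ℝ) + γ) * Real.Gamma ((n : ℝ) + γ) := by
      rw [show ((n : ℝ) + 1 + γ) = ((n : ℝ) + γ) + 1 from by ring, hrec _ (by positivity)]
    have g2 : Real.Gamma ((n : ℝ) + 1 + γ + D + 1)
        = ((n : ℝ) + γ + D + 1) * Real.Gamma ((n : ℝ) + γ + D + 1) := by
      rw [show ((n : ℝ) + 1 + γ + D + 1) = ((n : ℝ) + γ + D + 1) + 1 from by ring,
        hrec _ (by positivity)]
    rw [g1, g2]
    have h1 := (hΓ γ hγ).ne'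
    have h2 := (hΓ (γ + D + 1) (by positivity)).ne'
    have h3 := (hΓ ((n : ℝ) + γ) (by positivity)).ne'
    have h4 := (hΓ ((n : ℝ) + γ + D + 1) (by positivity)).ne'
    have h5 : γ + D ≠ 0 := by positivity
    have h6 : (n : ℝ) + γ + D + 1 ≠ 0 := by positivity
    have h7 : (n : ℝ) + 1 + γ + D ≠ 0 := by positivity
    field_simp
    ring
  | succ k hmk ih =>
    have hne : ¬ (k + 1 = m) := by omega
    rw [hLk k, if_neg hne, ih]
    push_cast
    have g1 : Real.Gamma ((k : ℝ) + 1 + γ) = ((k : ℝ) + γ) * Real.Gamma ((k : ℝ) + γ) := by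
      rw [show ((k : ℝ) + 1 + γ) = ((k : ℝ) + γ) + 1 from by ring, hrec _ (by positivity)]
    have g2 : Real.Gamma ((k : ℝ) + 1 + γ + D + 1)
        = ((k : ℝ) + γ + D + 1) * Real.Gamma ((k : ℝ) + γ + D + 1) := by
      rw [show ((k : ℝ) + 1 + γ + D + 1) = ((k : ℝ) + γ + D + 1) + 1 from by ring,
        hrec _ (by positivity)]
    rw [g1, g2]
    have h1 := (hΓ ((m : ℝ) + γ) (by positivity)).ne'
    have h2 := (hΓ ((m : ℝ) + γ + D + 1) (by positivity)).ne'
    have h3 := (hΓ ((k : ℝ) + γ) (by positivity)).ne'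
    have h4 := (hΓ ((k : ℝ) + γ + D + 1) (by positivity)).ne'
    have h5 := (hΓ γ hγ).ne'
    have h6 := (hΓ (γ + D + 1) (by positivity)).ne'
    have h7 : γ + D ≠ 0 := by positivity
    have h8 : (m : ℝ) + γ + D ≠ 0 := by positivity
    have h9 : (k : ℝ) + γ + D + 1 ≠ 0 := by positivity
    field_simp
    ring
end

section
/- Let D > 0 and γ > 0 be real numbers, let p_v, p_ve ≥ 0 be reals, and let m ≥ 1 be an integer. Define the sequence (L_k)_{k≥0} by L_0 = p_v·D/(γ+D) and, for k ≥ 1, L_k = (L_{k−1}·(k−1+γ) + δ_{k,m}·p_ve·D)/(k+γ+D), where δ_{k,m} equals 1 if k = m and 0 otherwise. Then lim_{k→∞} L_k · k^{1+D} = p_v·D·Γ(γ+D)/Γ(γ) + p_ve·D·Γ(m+γ+D)/Γ(m+γ). In particular, the sequence (L_k) decays like a power law with exponent β = 1 + D. -/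
/-!
Multiplying the recursion by the summation factor `w k = Γ(k+γ+1+D) / Γ(k+γ)` telescopes it:
`L k * w k` starts at `p_v D Γ(γ+D) / Γ(γ)` and changes only once, at `k = m`, by
`p_ve D Γ(m+γ+D) / Γ(m+γ)`. The power law then comes from `Γ(k+γ) / Γ(k+γ+1+D) ~ k^{-(1+D)}`,
a consequence of Euler's limit formula `Γ(s) = lim n^s n! / (s (s+1) ⋯ (s+n))`.
-/

open Filter Topology
open scoped Nat

namespace Real

lemma Gamma_add_nat_eq_mul_prod {s : ℝ} (hs : 0 < s) (n : ℕ) :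
    Gamma (s + n) = Gamma s * ∏ j ∈ Finset.range n, (s + j) := by
  induction n with
  | zero => simp
  | succ n ih =>
    rw [Nat.cast_succ, ← add_assoc, Gamma_add_one (by positivity), ih, Finset.prod_range_succ]
    ring

lemma GammaSeq_mul_Gamma_add_nat_add_one {s : ℝ} (hs : 0 < s) (n : ℕ) :
    GammaSeq s n * Gamma (s + n + 1) = n ^ s * n ! * Gamma s := by
  have hprod : ∏ j ∈ Finset.range (n + 1), (s + j) ≠ 0 :=
    Finset.prod_ne_zero_iff.2 fun j _ => by positivity
  rw [GammaSeq, show s + n + 1 = s + ((n + 1 : ℕ) : ℝ) by push_cast; ring,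
    Gamma_add_nat_eq_mul_prod hs]
  field_simp

theorem tendsto_rpow_mul_Gamma_div_Gamma_add {s a : ℝ} (hs : 0 < s) (hsa : 0 < s + a) :
    Tendsto (fun n : ℕ => (n : ℝ) ^ a * (Gamma (n + s) / Gamma (n + s + a))) atTop (𝓝 1) := by
  have hΓs := (Gamma_pos_of_pos hs).ne'
  have hΓsa := (Gamma_pos_of_pos hsa).ne'
  have hlim := (((GammaSeq_tendsto_Gamma (s + a)).div (GammaSeq_tendsto_Gamma s) hΓs).mul_const
    (Gamma s / Gamma (s + a))).mul
      (tendsto_add_mul_div_add_mul_atTop_nhds (s + a) s 1 one_ne_zero)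
  rw [show Gamma (s + a) / Gamma s * (Gamma s / Gamma (s + a)) * (1 / 1) = 1 by field_simp] at hlim
  refine hlim.congr' ?_
  filter_upwards [eventually_gt_atTop 0] with n hn
  have hn : (0 : ℝ) < n := by exact_mod_cast hn
  have hseq (t : ℝ) (ht : 0 < t) : GammaSeq t n = n ^ t * n ! * Gamma t / Gamma (t + n + 1) := by
    rw [eq_div_iff (Gamma_pos_of_pos (by positivity)).ne', GammaSeq_mul_Gamma_add_nat_add_one ht]
  have hΓn := (Gamma_pos_of_pos (show 0 < n + s by positivity)).ne'
  have hΓna := (Gamma_pos_of_pos (show 0 < n + s + a by linarith)).ne'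
  have hrec (t : ℝ) (ht : 0 < n + t) : Gamma (t + n + 1) = (n + t) * Gamma (n + t) := by
    rw [add_comm t, Gamma_add_one ht.ne']
  rw [Pi.div_apply, hseq s hs, hseq (s + a) hsa, hrec s (by positivity), hrec (s + a) (by linarith),
    rpow_add hn, ← add_assoc]
  have : (0 : ℝ) < n ^ s := by positivity
  have : (0 : ℝ) < n ! := by positivity
  have : (0 : ℝ) < n + s + a := by linarith
  field_simp
  ring

end Real

open Real

noncomputable def summationFactor (γ D : ℝ) (k : ℕ) : ℝ := Gamma (k + γ + 1 + D) / Gamma (k + γ)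

section PowerLaw

variable {D γ : ℝ}

lemma summationFactor_succ (hγ : 0 < γ) (hγD : 0 < γ + D) (k : ℕ) :
    summationFactor γ D (k + 1) = (k + 1 + γ + D) / (k + γ) * summationFactor γ D k := by
  have hΓ := (Gamma_pos_of_pos (show 0 < k + γ by positivity)).ne'
  have hkγ : (k : ℝ) + γ ≠ 0 := by positivity
  rw [summationFactor, summationFactor, Nat.cast_add_one, add_right_comm _ 1 γ,
    Gamma_add_one hkγ, show (k : ℝ) + γ + 1 + 1 + D = k + 1 + γ + D + 1 by ring,
    Gamma_add_one (by linarith [k.cast_nonneg (α := ℝ)]),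
    show (k : ℝ) + 1 + γ + D = k + γ + 1 + D by ring]
  field_simp

lemma mul_summationFactor_eq (hγ : 0 < γ) (hγD : 0 < γ + D) {pv pve : ℝ} {m : ℕ} (hm : 1 ≤ m)
    {L : ℕ → ℝ}
    (hL0 : L 0 = pv * D / (γ + D))
    (hLk : ∀ k : ℕ, L (k + 1) =
      (L k * ((k : ℝ) + γ) + (if k + 1 = m then (1 : ℝ) else 0) * pve * D)
        / (((k : ℝ) + 1) + γ + D)) (k : ℕ) :
    L k * summationFactor γ D k = pv * D * Gamma (γ + D) / Gamma γ +
      if m ≤ k then pve * D * Gamma (m + γ + D) / Gamma (m + γ) else 0 := by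
  induction k with
  | zero =>
    rw [if_neg (by omega), add_zero, summationFactor, hL0, Nat.cast_zero, zero_add,
      add_right_comm, Gamma_add_one hγD.ne']
    field_simp
  | succ k ih =>
    have hkγ : (k : ℝ) + γ ≠ 0 := by positivity
    have hden : (k : ℝ) + 1 + γ + D ≠ 0 := by linarith [k.cast_nonneg (α := ℝ)]
    have hsplit : L (k + 1) * summationFactor γ D (k + 1) = L k * summationFactor γ D k +
        (if k + 1 = m then (1 : ℝ) else 0) * (pve * D * (summationFactor γ D k / (k + γ))) := by
      rw [summationFactor_succ hγ hγD, hLk]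
      field_simp
    rw [hsplit, ih]
    by_cases hkm : k + 1 = m
    · subst hkm
      rw [if_pos rfl, if_neg (by omega), if_pos le_rfl, summationFactor, Nat.cast_add_one,
        add_right_comm _ 1 γ, Gamma_add_one hkγ, div_div, mul_comm (Gamma _)]
      ring
    · rw [if_neg hkm, zero_mul, add_zero, if_congr (show m ≤ k + 1 ↔ m ≤ k by omega) rfl rfl]

end PowerLaw

theorem Lk_power_law_general (D γ pv pve : ℝ) (hD : 0 < D) (hγ : 0 < γ)
    (m : ℕ) (hm : 1 ≤ m)
    (L : ℕ → ℝ) (hL0 : L 0 = pv * D / (γ + D))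
    (hLk : ∀ k : ℕ, L (k + 1) =
      (L k * ((k : ℝ) + γ) + (if k + 1 = m then (1 : ℝ) else 0) * pve * D)
        / (((k : ℝ) + 1) + γ + D)) :
    Filter.Tendsto (fun k : ℕ => L k * (k : ℝ) ^ ((1 : ℝ) + D)) Filter.atTop
      (nhds (pv * D * Real.Gamma (γ + D) / Real.Gamma γ
        + pve * D * Real.Gamma ((m : ℝ) + γ + D) / Real.Gamma ((m : ℝ) + γ))) := by
  have hγD : 0 < γ + D := by linarith
  have hdecay :=
    (tendsto_rpow_mul_Gamma_div_Gamma_add hγ (show 0 < γ + (1 + D) by linarith)).const_mul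
      (pv * D * Gamma (γ + D) / Gamma γ + pve * D * Gamma (m + γ + D) / Gamma (m + γ))
  rw [mul_one] at hdecay
  refine hdecay.congr' ?_
  filter_upwards [eventually_ge_atTop m] with k hkm
  have hΓ := (Gamma_pos_of_pos (show 0 < k + γ by positivity)).ne'
  have hΓ' := (Gamma_pos_of_pos (show 0 < k + γ + (1 + D) by positivity)).ne'
  have hconst := mul_summationFactor_eq hγ hγD hm hL0 hLk k
  rw [if_pos hkm] at hconst
  rw [← hconst, summationFactor, ← add_assoc]
  field_simp

/-- For the sequence `L` defined by `L 0 = p_v·D/(γ+D)` and, for `k ≥ 1`,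
`L k = (L (k−1)·(k−1+γ) + δ_{k,m}·p_ve·D)/(k+γ+D)` (with `D > 0`, `γ > 0`, `m ≥ 1`),
`L k · k^{1+D} → p_v·D·Γ(γ+D)/Γ(γ) + p_ve·D·Γ(m+γ+D)/Γ(m+γ)` as `k → ∞`;
i.e. `L` decays like a power law with exponent `β = 1 + D`. -/
theorem Lk_power_law (D γ pv pve : ℝ) (hD : 0 < D) (hγ : 0 < γ)
    (hpv : 0 ≤ pv) (hpve : 0 ≤ pve) (m : ℕ) (hm : 1 ≤ m)
    (L : ℕ → ℝ) (hL0 : L 0 = pv * D / (γ + D))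
    (hLk : ∀ k : ℕ, L (k + 1) =
      (L k * ((k : ℝ) + γ) + (if k + 1 = m then (1 : ℝ) else 0) * pve * D)
        / (((k : ℝ) + 1) + γ + D)) :
    Filter.Tendsto (fun k : ℕ => L k * (k : ℝ) ^ ((1 : ℝ) + D)) Filter.atTop
      (nhds (pv * D * Real.Gamma (γ + D) / Real.Gamma γ
        + pve * D * Real.Gamma ((m : ℝ) + γ + D) / Real.Gamma ((m : ℝ) + γ))) :=
  Lk_power_law_general D γ pv pve hD hγ m hm L hL0 hLk
end

section
/- For every fixed real number α, the limit as the real variable x → ∞ of Γ(x)·x^α / Γ(x+α) equals 1. -/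
/-!
Wendel's argument. Log-convexity of `Γ` between `x` and `x + 1`, together with
`Γ(x + 1) = x Γ(x)`, gives `Γ(x + s) ≤ Γ(x) x^s` for `0 ≤ s ≤ 1`; applied at `x + s` with
exponent `1 - s` it gives `x Γ(x) ≤ Γ(x + s) (x + s)^(1 - s)`. Hence the ratio lies between `1`
and `((x + s) / x)^(1 - s)`, which tends to `1`. The functional equation multiplies the ratio for
`α + 1` by `(x + α) / x → 1` to give the ratio for `α`, so the limit passes from the fractional
part of `α` to `α` itself.
-/

open Real Filter Topology Set

theorem Gamma_add_le_Gamma_mul_rpow {x s : ℝ} (hx : 0 < x) (hs₀ : 0 ≤ s) (hs₁ : s ≤ 1) :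
    Gamma (x + s) ≤ Gamma x * x ^ s := by
  have hΓ := Gamma_pos_of_pos hx
  have hconv := convexOn_log_Gamma.2 (mem_Ioi.2 hx) (mem_Ioi.2 (by linarith : 0 < x + 1))
    (sub_nonneg.2 hs₁) hs₀ (sub_add_cancel 1 s)
  simp only [smul_eq_mul, Function.comp_apply, Gamma_add_one hx.ne', log_mul hx.ne' hΓ.ne',
    show (1 - s) * x + s * (x + 1) = x + s by ring] at hconv
  rw [← log_le_log_iff (Gamma_pos_of_pos (by linarith)) (by positivity),
    log_mul hΓ.ne' (by positivity), log_rpow hx]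
  linarith

theorem mul_Gamma_le_Gamma_add_mul_rpow {x s : ℝ} (hx : 0 < x) (hs₀ : 0 ≤ s) (hs₁ : s ≤ 1) :
    x * Gamma x ≤ Gamma (x + s) * (x + s) ^ (1 - s) := by
  have h := Gamma_add_le_Gamma_mul_rpow (by linarith : 0 < x + s) (sub_nonneg.2 hs₁)
    (sub_le_self 1 hs₀)
  rwa [add_add_sub_cancel, Gamma_add_one hx.ne'] at h

noncomputable def gammaRatio (α x : ℝ) : ℝ := Gamma x * x ^ α / Gamma (x + α)

theorem one_le_gammaRatio {x s : ℝ} (hx : 0 < x) (hs₀ : 0 ≤ s) (hs₁ : s ≤ 1) :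
    1 ≤ gammaRatio s x := by
  rw [gammaRatio, one_le_div (Gamma_pos_of_pos (by linarith))]
  exact Gamma_add_le_Gamma_mul_rpow hx hs₀ hs₁

theorem gammaRatio_le_rpow {x s : ℝ} (hx : 0 < x) (hs₀ : 0 ≤ s) (hs₁ : s ≤ 1) :
    gammaRatio s x ≤ ((x + s) / x) ^ (1 - s) := by
  have hxs : 0 < x + s := by linarith
  rw [gammaRatio, div_le_iff₀ (Gamma_pos_of_pos hxs)]
  calc Gamma x * x ^ s = x * Gamma x * x ^ (s - 1) := by
        rw [rpow_sub_one hx.ne']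
        field_simp
    _ ≤ Gamma (x + s) * (x + s) ^ (1 - s) * x ^ (s - 1) :=
        mul_le_mul_of_nonneg_right (mul_Gamma_le_Gamma_add_mul_rpow hx hs₀ hs₁) (by positivity)
    _ = ((x + s) / x) ^ (1 - s) * Gamma (x + s) := by
        rw [div_rpow hxs.le hx.le, show s - 1 = -(1 - s) by ring, rpow_neg hx.le, div_eq_mul_inv]
        ring

theorem tendsto_add_div_self_atTop (a : ℝ) :
    Tendsto (fun x : ℝ => (x + a) / x) atTop (𝓝 1) := by
  have h : Tendsto (fun x : ℝ => 1 + a / x) atTop (𝓝 (1 + 0)) :=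
    tendsto_const_nhds.add (tendsto_const_nhds.div_atTop tendsto_id)
  rw [add_zero] at h
  refine h.congr' ?_
  filter_upwards [eventually_ne_atTop 0] with x hx
  field_simp

theorem tendsto_gammaRatio_of_mem_Icc {s : ℝ} (hs₀ : 0 ≤ s) (hs₁ : s ≤ 1) :
    Tendsto (gammaRatio s) atTop (𝓝 1) := by
  have hupper : Tendsto (fun x : ℝ => ((x + s) / x) ^ (1 - s)) atTop (𝓝 1) := by
    simpa using (tendsto_add_div_self_atTop s).rpow_const (Or.inl one_ne_zero)
  refine tendsto_of_tendsto_of_tendsto_of_le_of_le' tendsto_const_nhds hupper ?_ ?_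
  all_goals filter_upwards [eventually_gt_atTop 0] with x hx
  exacts [one_le_gammaRatio hx hs₀ hs₁, gammaRatio_le_rpow hx hs₀ hs₁]

theorem gammaRatio_eq_gammaRatio_add_one_mul {α x : ℝ} (hx : 0 < x) (hxα : 0 < x + α) :
    gammaRatio α x = gammaRatio (α + 1) x * ((x + α) / x) := by
  have hΓ := (Gamma_pos_of_pos hxα).ne'
  rw [gammaRatio, gammaRatio, ← add_assoc, Gamma_add_one hxα.ne', rpow_add_one hx.ne']
  field_simp

theorem tendsto_gammaRatio_add_one_iff (α : ℝ) :
    Tendsto (gammaRatio (α + 1)) atTop (𝓝 1) ↔ Tendsto (gammaRatio α) atTop (𝓝 1) := by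
  have hq := tendsto_add_div_self_atTop α
  have hpos : ∀ᶠ x in atTop, 0 < x ∧ 0 < x + α := by
    filter_upwards [eventually_gt_atTop 0, eventually_gt_atTop (-α)] with x hx hxα
    exact ⟨hx, by linarith⟩
  have heq : gammaRatio α =ᶠ[atTop] fun x => gammaRatio (α + 1) x * ((x + α) / x) :=
    hpos.mono fun x ⟨hx, hxα⟩ => gammaRatio_eq_gammaRatio_add_one_mul hx hxα
  rw [tendsto_congr' heq]
  refine ⟨fun h => by simpa using h.mul hq, fun h => ?_⟩
  have hdiv := h.div hq one_ne_zero
  rw [div_one] at hdiv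
  exact hdiv.congr' <| hpos.mono fun x ⟨hx, hxα⟩ =>
    mul_div_cancel_right₀ _ (div_ne_zero hxα.ne' hx.ne')

theorem tendsto_gammaRatio_add_intCast_iff (α : ℝ) (n : ℤ) :
    Tendsto (gammaRatio (α + n)) atTop (𝓝 1) ↔ Tendsto (gammaRatio α) atTop (𝓝 1) := by
  induction n using Int.induction_on with
  | zero => simp
  | succ n ih => rw [← ih, Int.cast_add, Int.cast_one, ← add_assoc, tendsto_gammaRatio_add_one_iff]
  | pred n ih =>
    rw [← ih, ← tendsto_gammaRatio_add_one_iff, Int.cast_sub, Int.cast_one]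
    ring_nf

/-- For every fixed real `α`, `Γ(x)·x^α / Γ(x+α) → 1` as the real
variable `x → ∞`. -/
theorem Gamma_ratio_tendsto_one (α : ℝ) :
    Filter.Tendsto (fun x : ℝ => Real.Gamma x * x ^ α / Real.Gamma (x + α))
      Filter.atTop (nhds 1) := by
  rw [← Int.fract_add_floor α]
  exact (tendsto_gammaRatio_add_intCast_iff _ _).2
    (tendsto_gammaRatio_of_mem_Icc (Int.fract_nonneg α) (Int.fract_lt_one α).le)
end

section
/- Let H = (V,E) be a hypergraph with at least one hyperedge in which every hyperedge has cardinality at most d, and let V = C_1 ∪ … ∪ C_r be a partition of V into r disjoint parts with vol(V) > 0. For each i let p_i = |E(C_i)|/|E| be the fraction of hyperedges entirely contained in C_i, and let s_i be the fraction of hyperedges containing at least one vertex of C_i. For each ℓ ≥ 1 let a_ℓ = |E_ℓ|/|E|, and set δ = vol(V)/|E|. Then q*(H) ≥ Σ_{i=1}^{r} p_i − Σ_{i=1}^{r} Σ_{ℓ≥1} a_ℓ·(((d−1)·s_i + p_i)/δ)^ℓ. -/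
attribute [local instance] Classical.propDecidable

/-- Degree of a vertex `v` in a hypergraph given by the multiset of hyperedges `E`. -/
def hdeg {V : Type*} [DecidableEq V] (E : Multiset (Multiset V)) (v : V) : ℕ :=
  (E.map fun e => e.count v).sum

/-- Volume of a set of vertices: the sum of the degrees of its elements. -/
def hvol {V : Type*} [DecidableEq V] (E : Multiset (Multiset V)) (A : Finset V) : ℕ :=
  ∑ v ∈ A, hdeg E v

/-- Modularity score of a partition `P` of the vertex set (Kamiński et al.):
`q_P(H) = Σ_{A ∈ P} ( |E(A)|/|E| − Σ_{ℓ ≥ 1} (|E_ℓ|/|E|)·(vol(A)/vol(V))^ℓ )`. -/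
noncomputable def hscore {V : Type*} [Fintype V] [DecidableEq V]
    (E : Multiset (Multiset V)) (P : Finpartition (Finset.univ : Finset V)) : ℝ :=
  ∑ A ∈ P.parts,
    ((Multiset.card (E.filter fun e => ∀ v ∈ e, v ∈ A) : ℝ) / (Multiset.card E : ℝ)
      - ∑' ℓ : ℕ,
          ((Multiset.card (E.filter fun e => Multiset.card e = ℓ + 1) : ℝ)
              / (Multiset.card E : ℝ))
            * ((hvol E A : ℝ) / (hvol E Finset.univ : ℝ)) ^ (ℓ + 1))

/-- Modularity of a hypergraph: the supremum of the modularity scores over all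
partitions of the vertex set. -/
noncomputable def hmodularity {V : Type*} [Fintype V] [DecidableEq V]
    (E : Multiset (Multiset V)) : ℝ :=
  ⨆ P : Finpartition (Finset.univ : Finset V), hscore E P

section aux
lemma sum_count_univ' {V : Type*} [Fintype V] [DecidableEq V] (e : Multiset V) :
    ∑ v : V, e.count v = Multiset.card e := by
  rw [← Multiset.toFinset_sum_count_eq]
  refine (Finset.sum_subset (Finset.subset_univ _) ?_).symm
  intro v _ hv
  simpa [Multiset.count_eq_zero] using hv

lemma vol_swap' {V : Type*} [DecidableEq V] (E : Multiset (Multiset V)) (A : Finset V) :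
    hvol E A = (E.map fun e => ∑ v ∈ A, e.count v).sum := by
  unfold hvol hdeg
  induction E using Multiset.induction_on with
  | empty => simp
  | cons e E ih => simp [Finset.sum_add_distrib, ih]

lemma vol_le' {V : Type*} [Fintype V] [DecidableEq V] (E : Multiset (Multiset V)) (A : Finset V)
    (d : ℕ) (hcard : ∀ e ∈ E, Multiset.card e ≤ d) :
    hvol E A + Multiset.card (E.filter fun e => ∃ v ∈ e, v ∈ A)
      ≤ d * Multiset.card (E.filter fun e => ∃ v ∈ e, v ∈ A)
        + Multiset.card (E.filter fun e => ∀ v ∈ e, v ∈ A) := by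
  rw [vol_swap']
  induction E using Multiset.induction_on with
  | empty => simp
  | cons e E ih =>
    have hde : Multiset.card e ≤ d := hcard e (Multiset.mem_cons_self e E)
    have ih' := ih fun f hf => hcard f (Multiset.mem_cons_of_mem hf)
    rw [Multiset.map_cons, Multiset.sum_cons, Multiset.filter_cons, Multiset.filter_cons]
    have hFe : ∑ v ∈ A, e.count v ≤ Multiset.card e := by
      rw [← sum_count_univ' (e := e)]
      exact Finset.sum_le_sum_of_subset (Finset.subset_univ A)
    rcases Classical.em (∃ v ∈ e, v ∈ A) with hT | hT
    · rcases Classical.em (∀ v ∈ e, v ∈ A) with hC | hC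
      · rw [if_pos hT, if_pos hC]
        simp only [Multiset.card_add, Multiset.card_singleton]
        have h1 : ∑ v ∈ A, e.count v ≤ d := hFe.trans hde
        have h2 : d * (1 + Multiset.card (E.filter fun e => ∃ v ∈ e, v ∈ A))
            = d + d * Multiset.card (E.filter fun e => ∃ v ∈ e, v ∈ A) := by ring
        omega
      · rw [if_pos hT, if_neg hC]
        simp only [Multiset.card_add, Multiset.card_singleton]
        obtain ⟨w, hwe, hwA⟩ := by push_neg at hC; exact hC
        have hkey : ∑ v ∈ A, e.count v + e.count w ≤ Multiset.card e := by
          have h3 : ∑ v ∈ insert w A, e.count v ≤ Multiset.card e := by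
            rw [← sum_count_univ' (e := e)]
            exact Finset.sum_le_sum_of_subset (Finset.subset_univ _)
          rwa [Finset.sum_insert hwA, add_comm] at h3
        have hw1 : 1 ≤ e.count w := Multiset.one_le_count_iff_mem.mpr hwe
        have h2 : d * (1 + Multiset.card (E.filter fun e => ∃ v ∈ e, v ∈ A))
            = d + d * Multiset.card (E.filter fun e => ∃ v ∈ e, v ∈ A) := by ring
        omega
    · have hF0 : ∑ v ∈ A, e.count v = 0 := by
        refine Finset.sum_eq_zero fun v hv => ?_
        rw [Multiset.count_eq_zero]
        exact fun hve => hT ⟨v, hve, hv⟩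
      rw [if_neg hT]
      rcases Classical.em (∀ v ∈ e, v ∈ A) with hC | hC
      · rw [if_pos hC]
        simp only [Multiset.card_add, Multiset.card_singleton, Multiset.card_zero, hF0, zero_add]
        omega
      · rw [if_neg hC]
        simp only [Multiset.card_add, Multiset.card_zero, hF0, zero_add]
        omega
end aux

/-- Let `H = (V, E)` be a hypergraph with at least one hyperedge, all
hyperedges of cardinality at most `d`, and a partition of `V` into parts `C 1, …, C r`,
with `vol(V) > 0`.  With `p i` the fraction of hyperedges inside `C i`, `s i` the fraction
of hyperedges touching `C i`, `a ℓ` the fraction of hyperedges of cardinality `ℓ` and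
`δ = vol(V)/|E|`, one has
`q*(H) ≥ Σ_i p_i − Σ_i Σ_{ℓ≥1} a_ℓ·(((d−1)·s_i + p_i)/δ)^ℓ`. -/
theorem hmodularity_lower_bound {V : Type*} [Fintype V] [DecidableEq V]
    (E : Multiset (Multiset V)) (d r : ℕ)
    (hE : E ≠ 0) (hne : ∀ e ∈ E, e ≠ 0) (hcard : ∀ e ∈ E, Multiset.card e ≤ d)
    (C : Fin r → Finset V)
    (hdisj : ∀ i j, i ≠ j → Disjoint (C i) (C j))
    (hcover : ∀ v : V, ∃ i, v ∈ C i)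
    (hvolpos : 0 < hvol E Finset.univ)
    (p s : Fin r → ℝ)
    (hp : ∀ i, p i =
      (Multiset.card (E.filter fun e => ∀ v ∈ e, v ∈ C i) : ℝ) / (Multiset.card E : ℝ))
    (hs : ∀ i, s i =
      (Multiset.card (E.filter fun e => ∃ v ∈ e, v ∈ C i) : ℝ) / (Multiset.card E : ℝ))
    (a : ℕ → ℝ)
    (ha : ∀ ℓ : ℕ, a ℓ =
      (Multiset.card (E.filter fun e => Multiset.card e = ℓ) : ℝ) / (Multiset.card E : ℝ))
    (δ : ℝ) (hδ : δ = (hvol E Finset.univ : ℝ) / (Multiset.card E : ℝ)) :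
    hmodularity E ≥ ∑ i, p i
      - ∑ i, ∑' ℓ : ℕ, a (ℓ + 1) * ((((d : ℝ) - 1) * s i + p i) / δ) ^ (ℓ + 1) := by
  have hEcard : 0 < Multiset.card E := Multiset.card_pos.mpr hE
  have hEcardR : (0:ℝ) < (Multiset.card E : ℝ) := by exact_mod_cast hEcard
  have hvolR : (0:ℝ) < (hvol E Finset.univ : ℝ) := by exact_mod_cast hvolpos
  have hδpos : 0 < δ := by rw [hδ]; positivity
  have hanonneg : ∀ ℓ, 0 ≤ a ℓ := fun ℓ => by rw [ha]; positivity
  have hazero : ∀ ℓ : ℕ, d < ℓ → a ℓ = 0 := by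
    intro ℓ hℓ
    rw [ha]
    have h0 : E.filter (fun e => Multiset.card e = ℓ) = 0 := by
      rw [Multiset.filter_eq_nil]
      intro e he hc
      exact absurd (hcard e he) (by omega)
    simp [h0]
  -- the partition
  have hsupindep : (Finset.univ.image C).SupIndep id := by
    rw [Finset.supIndep_iff_pairwiseDisjoint]
    intro A hA B hB hAB
    simp only [Finset.coe_image, Set.mem_image] at hA hB
    obtain ⟨i, _, rfl⟩ := hA
    obtain ⟨j, _, rfl⟩ := hB
    exact hdisj i j fun h => hAB (by rw [h])
  have hsup : (Finset.univ.image C).sup id = Finset.univ := by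
    rw [Finset.eq_univ_iff_forall]
    intro v
    obtain ⟨i, hi⟩ := hcover v
    exact Finset.mem_sup.mpr ⟨C i, Finset.mem_image_of_mem C (Finset.mem_univ i), hi⟩
  set P : Finpartition (Finset.univ : Finset V) :=
    Finpartition.ofErase (Finset.univ.image C) hsupindep hsup with hP
  have hPparts : P.parts = (Finset.univ.image C).erase ∅ := rfl
  -- boundedness of scores
  have hscore_le : ∀ Q : Finpartition (Finset.univ : Finset V),
      hscore E Q ≤ (Fintype.card (Finset V) : ℝ) := by
    intro Q
    unfold hscore
    calc ∑ A ∈ Q.parts,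
        ((Multiset.card (E.filter fun e => ∀ v ∈ e, v ∈ A) : ℝ) / (Multiset.card E : ℝ)
          - ∑' ℓ : ℕ,
              ((Multiset.card (E.filter fun e => Multiset.card e = ℓ + 1) : ℝ)
                  / (Multiset.card E : ℝ))
                * ((hvol E A : ℝ) / (hvol E Finset.univ : ℝ)) ^ (ℓ + 1))
        ≤ ∑ A ∈ Q.parts, (1:ℝ) := by
          refine Finset.sum_le_sum fun A _ => ?_
          have h1 : (Multiset.card (E.filter fun e => ∀ v ∈ e, v ∈ A) : ℝ)
              / (Multiset.card E : ℝ) ≤ 1 := by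
            rw [div_le_one hEcardR]
            exact_mod_cast Multiset.card_le_card (Multiset.filter_le _ _)
          have h2 : (0:ℝ) ≤ ∑' ℓ : ℕ,
              ((Multiset.card (E.filter fun e => Multiset.card e = ℓ + 1) : ℝ)
                  / (Multiset.card E : ℝ))
                * ((hvol E A : ℝ) / (hvol E Finset.univ : ℝ)) ^ (ℓ + 1) := by
            refine tsum_nonneg fun ℓ => ?_
            positivity
          linarith
      _ = (Q.parts.card : ℝ) := by simp
      _ ≤ (Fintype.card (Finset V) : ℝ) := by exact_mod_cast Finset.card_le_univ _
  have hbdd : BddAbove (Set.range fun Q : Finpartition (Finset.univ : Finset V) =>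
      hscore E Q) := ⟨(Fintype.card (Finset V) : ℝ), by rintro x ⟨Q, rfl⟩; exact hscore_le Q⟩
  have hub : hscore E P ≤ hmodularity E := le_ciSup hbdd P
  refine le_trans ?_ hub
  -- the main estimate
  rw [← Finset.sum_sub_distrib]
  -- terms for empty parts vanish
  set S : Finset (Fin r) := Finset.univ.filter fun i => C i ≠ ∅ with hS
  have hzero : ∀ i ∈ Finset.univ, i ∉ S →
      p i - (∑' ℓ : ℕ, a (ℓ + 1) * ((((d : ℝ) - 1) * s i + p i) / δ) ^ (ℓ + 1)) = 0 := by
    intro i _ hiS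
    have hCi : C i = ∅ := by
      by_contra h
      exact hiS (by simp [hS, h])
    have hp0 : p i = 0 := by
      rw [hp]
      have : E.filter (fun e => ∀ v ∈ e, v ∈ C i) = 0 := by
        rw [Multiset.filter_eq_nil]
        intro e he hall
        obtain ⟨v, hv⟩ := Multiset.exists_mem_of_ne_zero (hne e he)
        simpa [hCi] using hall v hv
      simp [this]
    have hs0 : s i = 0 := by
      rw [hs]
      have : E.filter (fun e => ∃ v ∈ e, v ∈ C i) = 0 := by
        rw [Multiset.filter_eq_nil]
        rintro e he ⟨v, _, hv⟩
        simp [hCi] at hv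
      simp [this]
    have hterm : ∀ ℓ : ℕ, a (ℓ + 1) * ((((d : ℝ) - 1) * s i + p i) / δ) ^ (ℓ + 1) = 0 := by
      intro ℓ
      rw [hp0, hs0]
      simp
    rw [(tsum_congr hterm).trans tsum_zero, hp0]
    simp
  rw [← Finset.sum_subset (Finset.filter_subset (fun i => C i ≠ ∅) Finset.univ)
    (by intro i hi hiS; exact hzero i hi (by simpa [hS] using hiS))]
  -- compare termwise with the score of part C i, then re-index
  have hterm_le : ∀ i ∈ S, p i
        - (∑' ℓ : ℕ, a (ℓ + 1) * ((((d : ℝ) - 1) * s i + p i) / δ) ^ (ℓ + 1))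
      ≤ (Multiset.card (E.filter fun e => ∀ v ∈ e, v ∈ C i) : ℝ) / (Multiset.card E : ℝ)
        - ∑' ℓ : ℕ,
            ((Multiset.card (E.filter fun e => Multiset.card e = ℓ + 1) : ℝ)
                / (Multiset.card E : ℝ))
              * ((hvol E (C i) : ℝ) / (hvol E Finset.univ : ℝ)) ^ (ℓ + 1) := by
    intro i _
    rw [← hp i]
    simp only [← ha]
    refine sub_le_sub_left ?_ _
    -- compare the two series
    have hxy : (hvol E (C i) : ℝ) / (hvol E Finset.univ : ℝ)
        ≤ (((d : ℝ) - 1) * s i + p i) / δ := by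
      have hnat := vol_le' E (C i) d hcard
      have hreal : (hvol E (C i) : ℝ)
          ≤ ((d : ℝ) - 1) * (Multiset.card (E.filter fun e => ∃ v ∈ e, v ∈ C i) : ℝ)
            + (Multiset.card (E.filter fun e => ∀ v ∈ e, v ∈ C i) : ℝ) := by
        have hcast := (Nat.cast_le (α := ℝ)).mpr hnat
        push_cast at hcast
        nlinarith [hcast]
      have hy : (((d : ℝ) - 1) * s i + p i) / δ
          = (((d : ℝ) - 1) * (Multiset.card (E.filter fun e => ∃ v ∈ e, v ∈ C i) : ℝ)
              + (Multiset.card (E.filter fun e => ∀ v ∈ e, v ∈ C i) : ℝ))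
            / (hvol E Finset.univ : ℝ) := by
        rw [hs, hp, hδ]
        field_simp
      rw [hy]
      gcongr
    have hx0 : (0:ℝ) ≤ (hvol E (C i) : ℝ) / (hvol E Finset.univ : ℝ) := by positivity
    have hL : (∑' ℓ : ℕ, a (ℓ + 1)
          * ((hvol E (C i) : ℝ) / (hvol E Finset.univ : ℝ)) ^ (ℓ + 1))
        = ∑ ℓ ∈ Finset.range d, a (ℓ + 1)
          * ((hvol E (C i) : ℝ) / (hvol E Finset.univ : ℝ)) ^ (ℓ + 1) := by
      refine tsum_eq_sum fun ℓ hℓ => ?_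
      rw [hazero (ℓ + 1) (by have := Finset.mem_range.not.mp hℓ; omega), zero_mul]
    have hR : (∑' ℓ : ℕ, a (ℓ + 1) * ((((d : ℝ) - 1) * s i + p i) / δ) ^ (ℓ + 1))
        = ∑ ℓ ∈ Finset.range d, a (ℓ + 1) * ((((d : ℝ) - 1) * s i + p i) / δ) ^ (ℓ + 1) := by
      refine tsum_eq_sum fun ℓ hℓ => ?_
      rw [hazero (ℓ + 1) (by have := Finset.mem_range.not.mp hℓ; omega), zero_mul]
    rw [hL, hR]
    refine Finset.sum_le_sum fun ℓ _ => ?_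
    exact mul_le_mul_of_nonneg_left (pow_le_pow_left₀ hx0 hxy _) (hanonneg _)
  refine le_trans (Finset.sum_le_sum hterm_le) (le_of_eq ?_)
  -- re-index the sum over nonempty classes as the sum over parts
  unfold hscore
  rw [hPparts]
  refine Finset.sum_bij (fun i _ => C i) ?_ ?_ ?_ ?_
  · intro i hi
    refine Finset.mem_erase.mpr ⟨by simpa [hS] using hi, Finset.mem_image_of_mem C (Finset.mem_univ i)⟩
  · intro i hi j hj hij
    by_contra hne'
    have hd2 := hdisj i j hne'
    have hCi : C i ≠ ∅ := by simpa [hS] using hi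
    have hij' : C i = C j := hij
    rw [← hij'] at hd2
    exact hCi (Finset.bot_eq_empty (α := V) ▸ disjoint_self.mp hd2)
  · intro A hA
    obtain ⟨hA0, hAim⟩ := Finset.mem_erase.mp hA
    obtain ⟨i, _, rfl⟩ := Finset.mem_image.mp hAim
    exact ⟨i, by simpa [hS] using hA0, rfl⟩
  · intro i hi
    rfl
end

section
/- Let r ≥ 1, d ≥ 1 and ℓ ≥ 2 be integers and α ≥ 0, β ≥ 0 real numbers. Let s̃_1, …, s̃_r be nonnegative reals with Σ_{i=1}^{r} s̃_i ≤ d·α, and let p_1, …, p_r be reals with 0 ≤ p_i ≤ β for every i. Then Σ_{i=1}^{r} ((d−1)·s̃_i + d·p_i)^ℓ ≤ (r−1)·(d·β)^ℓ + ((d−1)·d·α + d·β)^ℓ. -/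
/-! After bounding each `pᵢ` by `β`, every term is `f (aᵢ)` for the function
`f x = (x + c) ^ ℓ`, convex on `[0, ∞)`. A convex function on `[0, ∞)` satisfies
`f x + f y ≤ f (x + y) + f 0`, so the excesses `f (aᵢ) - f 0` add up to at most
`f (∑ aᵢ) - f 0`: the sum is largest when all the mass `(d - 1) d α` sits in a single term. -/

open Finset

variable {𝕜 : Type*} [Field 𝕜] [LinearOrder 𝕜] [IsStrictOrderedRing 𝕜]

theorem ConvexOn.map_add_map_le_map_add_add_map_zero {f : 𝕜 → 𝕜}
    (hf : ConvexOn 𝕜 (Set.Ici 0) f) {x y : 𝕜} (hx : 0 ≤ x) (hy : 0 ≤ y) :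
    f x + f y ≤ f (x + y) + f 0 := by
  rcases (add_nonneg hx hy).eq_or_lt with hxy | hxy
  · obtain ⟨rfl, rfl⟩ : x = 0 ∧ y = 0 := ⟨by linarith, by linarith⟩
    simp
  -- `x` and `y` are the two convex combinations of the endpoints `x + y` and `0`.
  have hw : x / (x + y) + y / (x + y) = 1 := by field_simp
  have hsum : x + y ∈ Set.Ici (0 : 𝕜) := Set.mem_Ici.2 hxy.le
  have hzero : (0 : 𝕜) ∈ Set.Ici 0 := Set.self_mem_Ici
  have hfx : f x ≤ x / (x + y) * f (x + y) + y / (x + y) * f 0 := by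
    have h := hf.2 hsum hzero (by positivity) (by positivity) hw
    simpa only [smul_eq_mul, mul_zero, add_zero, div_mul_cancel₀ x hxy.ne'] using h
  have hfy : f y ≤ y / (x + y) * f (x + y) + x / (x + y) * f 0 := by
    have h := hf.2 hsum hzero (by positivity) (by positivity) ((add_comm _ _).trans hw)
    simpa only [smul_eq_mul, mul_zero, add_zero, div_mul_cancel₀ y hxy.ne'] using h
  linear_combination hfx + hfy + (f (x + y) + f 0) * hw

theorem ConvexOn.sum_sub_map_zero_le {ι : Type*} {f : 𝕜 → 𝕜}
    (hf : ConvexOn 𝕜 (Set.Ici 0) f)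
    (s : Finset ι) (a : ι → 𝕜) (ha : ∀ i ∈ s, 0 ≤ a i) :
    ∑ i ∈ s, (f (a i) - f 0) ≤ f (∑ i ∈ s, a i) - f 0 := by
  have h := le_sum_of_subadditive_on_pred (fun x => f 0 - f x) (0 ≤ ·) (by simp)
    (fun x y hx hy => by linarith [hf.map_add_map_le_map_add_add_map_zero hx hy])
    (fun _ _ => add_nonneg) a ha
  simp only [← neg_sub (f _) (f 0), sum_neg_distrib] at h
  linarith

theorem sum_add_pow_le {ι : Type*} (s : Finset ι) (a : ι → 𝕜) (ha : ∀ i ∈ s, 0 ≤ a i)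
    {A c : 𝕜} (hA : ∑ i ∈ s, a i ≤ A) (hc : 0 ≤ c) (ℓ : ℕ) :
    ∑ i ∈ s, (a i + c) ^ ℓ ≤ ((#s : 𝕜) - 1) * c ^ ℓ + (A + c) ^ ℓ := by
  have hconvex : ConvexOn 𝕜 (Set.Ici 0) fun x => (x + c) ^ ℓ :=
    ((convexOn_pow ℓ).translate_left c).subset
      (fun x (hx : 0 ≤ x) => show 0 ≤ c + x by linarith) (convex_Ici 0)
  have hexcess := hconvex.sum_sub_map_zero_le s a ha
  have hmono : (∑ i ∈ s, a i + c) ^ ℓ ≤ (A + c) ^ ℓ :=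
    pow_le_pow_left₀ (add_nonneg (sum_nonneg ha) hc) (by linarith) ℓ
  simp only [sum_sub_distrib, sum_const, zero_add, nsmul_eq_mul] at hexcess
  linarith

theorem power_sum_bound_general (r d ℓ : ℕ) (hd : 1 ≤ d)
    (α β : ℝ) (hβ : 0 ≤ β)
    (s p : Fin r → ℝ) (hs : ∀ i, 0 ≤ s i) (hssum : ∑ i, s i ≤ (d : ℝ) * α)
    (hp : ∀ i, 0 ≤ p i ∧ p i ≤ β) :
    ∑ i, (((d : ℝ) - 1) * s i + (d : ℝ) * p i) ^ ℓ
      ≤ ((r : ℝ) - 1) * ((d : ℝ) * β) ^ ℓ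
        + (((d : ℝ) - 1) * (d : ℝ) * α + (d : ℝ) * β) ^ ℓ := by
  have hd1 : (0 : ℝ) ≤ d - 1 := sub_nonneg.2 (by exact_mod_cast hd)
  calc ∑ i, (((d : ℝ) - 1) * s i + d * p i) ^ ℓ
      ≤ ∑ i, (((d : ℝ) - 1) * s i + d * β) ^ ℓ := by
        refine sum_le_sum fun i _ => pow_le_pow_left₀ ?_ ?_ ℓ
        · have := hs i; have := (hp i).1; positivity
        · gcongr; exact (hp i).2
    _ ≤ _ := by
        have hmass : ∑ i, ((d : ℝ) - 1) * s i ≤ (d - 1) * d * α := by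
          rw [← mul_sum, mul_assoc]
          exact mul_le_mul_of_nonneg_left hssum hd1
        simpa using sum_add_pow_le univ _ (fun i _ => mul_nonneg hd1 (hs i)) hmass
          (by positivity) ℓ

/-- For integers `r, d ≥ 1`, `ℓ ≥ 2` and reals `α, β ≥ 0`, if
`s̃ 1, …, s̃ r ≥ 0` satisfy `Σ_i s̃ i ≤ d·α` and `0 ≤ p i ≤ β` for each `i`, then
`Σ_i ((d−1)·s̃_i + d·p_i)^ℓ ≤ (r−1)·(d·β)^ℓ + ((d−1)·d·α + d·β)^ℓ`. -/
theorem power_sum_bound (r d ℓ : ℕ) (hr : 1 ≤ r) (hd : 1 ≤ d) (hℓ : 2 ≤ ℓ)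
    (α β : ℝ) (hα : 0 ≤ α) (hβ : 0 ≤ β)
    (s p : Fin r → ℝ) (hs : ∀ i, 0 ≤ s i) (hssum : ∑ i, s i ≤ (d : ℝ) * α)
    (hp : ∀ i, 0 ≤ p i ∧ p i ≤ β) :
    ∑ i, (((d : ℝ) - 1) * s i + (d : ℝ) * p i) ^ ℓ
      ≤ ((r : ℝ) - 1) * ((d : ℝ) * β) ^ ℓ
        + (((d : ℝ) - 1) * (d : ℝ) * α + (d : ℝ) * β) ^ ℓ :=
  power_sum_bound_general r d ℓ hd α β hβ s p hs hssum hp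
end

section
/- Let G = (V,E) be a finite multigraph with at least one edge and let V = C_1 ∪ … ∪ C_r be a partition of V into r disjoint parts. For each i let p_i = |E(C_i)|/|E| be the fraction of edges with both endpoints in C_i; set α = 1 − Σ_{i=1}^{r} p_i and β = max_{1≤i≤r} p_i. Then q*(G) ≥ 1 − r·β² − α·(1 + α + 2β). -/
attribute [local instance] Classical.propDecidable

/-- Degree of a vertex `v` in a multigraph given by the multiset of edges `E`
(edges are unordered pairs; a self-loop at `v` counts twice). -/
def mdeg {V : Type*} [DecidableEq V] (E : Multiset (Sym2 V)) (v : V) : ℕ :=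
  (E.map fun e => if e = s(v, v) then 2 else if v ∈ e then 1 else 0).sum

/-- Volume of a set of vertices: the sum of the degrees of its elements. -/
def mvol {V : Type*} [DecidableEq V] (E : Multiset (Sym2 V)) (A : Finset V) : ℕ :=
  ∑ v ∈ A, mdeg E v

/-- Newman–Girvan modularity score of a partition `P` of the vertex set:
`q_P(G) = Σ_{A ∈ P} ( |E(A)|/|E| − (vol(A)/(2|E|))² )`. -/
noncomputable def mscore {V : Type*} [Fintype V] [DecidableEq V]
    (E : Multiset (Sym2 V)) (P : Finpartition (Finset.univ : Finset V)) : ℝ :=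
  ∑ A ∈ P.parts,
    ((Multiset.card (E.filter fun e => ∀ v ∈ e, v ∈ A) : ℝ) / (Multiset.card E : ℝ)
      - ((mvol E A : ℝ) / (2 * (Multiset.card E : ℝ))) ^ 2)

/-- Modularity of a multigraph: the supremum of the modularity scores over all
partitions of the vertex set. -/
noncomputable def mmodularity {V : Type*} [Fintype V] [DecidableEq V]
    (E : Multiset (Sym2 V)) : ℝ :=
  ⨆ P : Finpartition (Finset.univ : Finset V), mscore E P

private def w {V : Type*} [DecidableEq V] (v : V) (e : Sym2 V) : ℕ :=
  if e = s(v, v) then 2 else if v ∈ e then 1 else 0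

lemma sum_map_swap' {γ ι : Type*} (E : Multiset γ) (A : Finset ι) (f : ι → γ → ℕ) :
    ∑ v ∈ A, (E.map (f v)).sum = (E.map (fun e => ∑ v ∈ A, f v e)).sum := by
  induction E using Multiset.induction with
  | empty => simp
  | cons a s ih => simp [Finset.sum_add_distrib, ih]

lemma sum_w_pair {V : Type*} [DecidableEq V] (A : Finset V) (a b : V) :
    ∑ v ∈ A, w v s(a,b) = (if a ∈ A then 1 else 0) + (if b ∈ A then 1 else 0) := by
  by_cases hab : a = b
  · subst hab
    have h : ∀ v : V, w v s(a,a) = if v = a then 2 else 0 := by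
      intro v; unfold w
      by_cases hv : v = a
      · subst hv; simp
      · simp [Sym2.eq_iff, hv, Ne.symm hv]
    rw [Finset.sum_congr rfl fun v _ => h v, Finset.sum_ite_eq' A a]
    split <;> simp
  · have h : ∀ v : V, w v s(a,b) = (if v = a then 1 else 0) + (if v = b then 1 else 0) := by
      intro v; unfold w
      have hne : s(a,b) ≠ s(v,v) := by
        simp only [Sym2.eq_iff, ne_eq]
        rintro (⟨rfl, rfl⟩ | ⟨rfl, rfl⟩) <;> exact hab rfl
      rw [if_neg hne]
      by_cases hva : v = a
      · subst hva
        simp [Sym2.mem_iff, hab]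
      · by_cases hvb : v = b
        · subst hvb; simp [Sym2.mem_iff, hva]
        · simp [Sym2.mem_iff, hva, hvb]
    rw [Finset.sum_congr rfl fun v _ => h v, Finset.sum_add_distrib,
      Finset.sum_ite_eq' A a, Finset.sum_ite_eq' A b]

lemma map_two_indicator {γ : Type*} (E : Multiset γ) (P : γ → Prop) [DecidablePred P] :
    (E.map (fun e => if P e then 2 else 0)).sum = 2 * Multiset.card (E.filter P) := by
  induction E using Multiset.induction with
  | empty => simp
  | cons a s ih =>
    by_cases h : P a <;> simp [h, ih, Multiset.filter_cons, mul_add, add_comm]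

lemma mvol_eq_map_sum {V : Type*} [DecidableEq V] (E : Multiset (Sym2 V)) (A : Finset V) :
    mvol E A = (E.map (fun e => ∑ v ∈ A, w v e)).sum := by
  rw [mvol]
  exact sum_map_swap' E A w

/-- The finpartition of `univ` whose parts are the nonempty `C i`. -/
def partsOfCover {V : Type*} [Fintype V] [DecidableEq V] {r : ℕ} (C : Fin r → Finset V)
    (hdisj : ∀ i j, i ≠ j → Disjoint (C i) (C j))
    (hcover : ∀ v : V, ∃ i, v ∈ C i) :
    Finpartition (Finset.univ : Finset V) where
  parts := (Finset.univ.filter fun i => (C i).Nonempty).image C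
  supIndep := by
    apply Finset.supIndep_iff_pairwiseDisjoint.mpr
    intro A hA B hB hAB
    simp only [Finset.coe_image, Set.mem_image, Finset.mem_coe, Finset.mem_filter] at hA hB
    obtain ⟨i, _, rfl⟩ := hA
    obtain ⟨j, _, rfl⟩ := hB
    exact hdisj i j (fun h => hAB (h ▸ rfl))
  sup_parts := by
    apply le_antisymm
    · exact Finset.sup_le fun A _ => Finset.le_iff_subset.mpr (Finset.subset_univ A)
    · intro v _
      obtain ⟨i, hi⟩ := hcover v
      exact Finset.mem_sup.mpr
        ⟨C i, Finset.mem_image.mpr ⟨i, Finset.mem_filter.mpr ⟨Finset.mem_univ i, ⟨v, hi⟩⟩, rfl⟩, hi⟩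
  bot_notMem := by
    simp only [Finset.bot_eq_empty, Finset.mem_image, Finset.mem_filter]
    rintro ⟨i, ⟨-, hne⟩, hCi⟩
    exact hne.ne_empty hCi

instance finpartitionFinite {V : Type*} [Fintype V] [DecidableEq V] :
    Finite (Finpartition (Finset.univ : Finset V)) :=
  Finite.of_injective (fun P => P.parts) fun _ _ h => Finpartition.ext h

/-- Let `G = (V, E)` be a finite multigraph with at least one edge and
`C 1, …, C r` a partition of `V`.  With `p i` the fraction of edges with both endpoints
in `C i`, `α = 1 − Σ_i p_i` and `β = max_i p_i`,
`q*(G) ≥ 1 − r·β² − α·(1 + α + 2β)`. -/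
theorem mmodularity_lower_bound_alpha_beta {V : Type*} [Fintype V] [DecidableEq V]
    (E : Multiset (Sym2 V)) (r : ℕ) (hE : E ≠ 0)
    (C : Fin r → Finset V)
    (hdisj : ∀ i j, i ≠ j → Disjoint (C i) (C j))
    (hcover : ∀ v : V, ∃ i, v ∈ C i)
    (p : Fin r → ℝ)
    (hp : ∀ i, p i =
      (Multiset.card (E.filter fun e => ∀ v ∈ e, v ∈ C i) : ℝ) / (Multiset.card E : ℝ))
    (α β : ℝ) (hα : α = 1 - ∑ i, p i) (hβ : IsGreatest (Set.range p) β) :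
    mmodularity E ≥ 1 - (r : ℝ) * β ^ 2 - α * (1 + α + 2 * β) := by
  classical
  have hm0 : 0 < (Multiset.card E : ℝ) := by
    have : Multiset.card E ≠ 0 := by simpa using (Multiset.card_pos.mpr hE).ne'
    positivity
  -- exactly one part contains each vertex
  have hone : ∀ a : V, ∑ i : Fin r, (if a ∈ C i then (1:ℕ) else 0) = 1 := by
    intro a
    obtain ⟨i₀, hi₀⟩ := hcover a
    have hfil : Finset.univ.filter (fun i => a ∈ C i) = {i₀} := by
      ext j
      simp only [Finset.mem_filter, Finset.mem_univ, true_and, Finset.mem_singleton]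
      constructor
      · intro hj
        by_contra hne
        exact (Finset.disjoint_left.mp (hdisj j i₀ hne)) hj hi₀
      · rintro rfl; exact hi₀
    rw [← Finset.sum_filter, hfil, Finset.sum_singleton]
  -- handshake over the partition
  have hvolsum : ∑ i : Fin r, mvol E (C i) = 2 * Multiset.card E := by
    have h1 : ∑ i : Fin r, mvol E (C i)
        = (E.map (fun e => ∑ i : Fin r, ∑ v ∈ C i, w v e)).sum := by
      rw [Finset.sum_congr rfl fun i _ => mvol_eq_map_sum E (C i)]
      exact sum_map_swap' E Finset.univ (fun i e => ∑ v ∈ C i, w v e)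
    have h2 : ∀ e : Sym2 V, ∑ i : Fin r, ∑ v ∈ C i, w v e = 2 := by
      intro e
      induction e using Sym2.ind with
      | _ a b =>
        rw [Finset.sum_congr rfl fun i _ => sum_w_pair (C i) a b,
          Finset.sum_add_distrib, hone a, hone b]
    rw [h1, Multiset.map_congr rfl fun e _ => h2 e]
    simp [mul_comm]
  -- volume dominates twice inside count
  have hvol_ge : ∀ i,
      2 * Multiset.card (E.filter fun e => ∀ v ∈ e, v ∈ C i) ≤ mvol E (C i) := by
    intro i
    rw [mvol_eq_map_sum, ← map_two_indicator E (fun e => ∀ v ∈ e, v ∈ C i)]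
    apply Multiset.sum_map_le_sum_map
    intro e _
    induction e using Sym2.ind with
    | _ a b =>
      rw [sum_w_pair]
      by_cases h : ∀ v ∈ (s(a,b) : Sym2 V), v ∈ C i
      · have ha : a ∈ C i := h a (by simp)
        have hb : b ∈ C i := h b (by simp)
        rw [if_pos h, if_pos ha, if_pos hb]
      · rw [if_neg h]
        exact Nat.zero_le _
  -- zero counts for empty parts
  have hins_empty : ∀ i, C i = ∅ →
      Multiset.card (E.filter fun e => ∀ v ∈ e, v ∈ C i) = 0 := by
    intro i hCi
    simp only [Multiset.card_eq_zero]
    rw [Multiset.filter_eq_nil]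
    intro e _ h
    induction e using Sym2.ind with
    | _ a b => exact absurd (hCi ▸ h a (by simp)) (Finset.notMem_empty a)
  -- injectivity of C on nonempty parts
  have hCinj : ∀ i ∈ Finset.univ.filter (fun i => (C i).Nonempty),
      ∀ j ∈ Finset.univ.filter (fun i => (C i).Nonempty), C i = C j → i = j := by
    intro i hi j hj hij
    by_contra hne
    obtain ⟨v, hv⟩ := (Finset.mem_filter.mp hi).2
    exact (Finset.disjoint_left.mp (hdisj i j hne)) hv (hij ▸ hv)
  set P : Finpartition (Finset.univ : Finset V) := partsOfCover C hdisj hcover with hP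
  -- mscore of P equals the sum over all i
  have hscore : mscore E P
      = ∑ i : Fin r, ((Multiset.card (E.filter fun e => ∀ v ∈ e, v ∈ C i) : ℝ)
          / (Multiset.card E : ℝ)
        - ((mvol E (C i) : ℝ) / (2 * (Multiset.card E : ℝ))) ^ 2) := by
    rw [hP]
    unfold mscore partsOfCover
    rw [Finset.sum_image hCinj]
    apply Finset.sum_subset (Finset.filter_subset _ _)
    intro i _ hi
    simp only [Finset.mem_filter, Finset.mem_univ, true_and,
      Finset.not_nonempty_iff_eq_empty] at hi
    have h1 := hins_empty i hi
    have h2 : mvol E (C i) = 0 := by rw [mvol, hi]; simp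
    rw [h1, h2]
    simp
  -- real-valued facts
  set Pv : Fin r → ℝ := fun i => (mvol E (C i) : ℝ) / (2 * (Multiset.card E : ℝ)) with hPv
  have hp_le : ∀ i, p i ≤ Pv i := by
    intro i
    rw [hp i, hPv]
    rw [div_le_div_iff₀ hm0 (by positivity)]
    have := hvol_ge i
    have : (2 * Multiset.card (E.filter fun e => ∀ v ∈ e, v ∈ C i) : ℝ)
        ≤ (mvol E (C i) : ℝ) := by exact_mod_cast this
    nlinarith
  have hPsum : ∑ i, Pv i = 1 := by
    rw [hPv, ← Finset.sum_div]
    rw [div_eq_one_iff_eq (by positivity), ← Nat.cast_sum, hvolsum]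
    push_cast
    ring
  have hp0 : ∀ i, 0 ≤ p i := by
    intro i; rw [hp i]; positivity
  have hpβ : ∀ i, p i ≤ β := fun i => hβ.2 ⟨i, rfl⟩
  have hβ0 : 0 ≤ β := by
    obtain ⟨i, hi⟩ := hβ.1
    exact hi ▸ hp0 i
  have hxsum : ∑ i, (Pv i - p i) = α := by
    rw [Finset.sum_sub_distrib, hPsum, hα]
  have hα0 : 0 ≤ α := by
    rw [← hxsum]
    exact Finset.sum_nonneg fun i _ => sub_nonneg.mpr (hp_le i)
  -- bound the score
  have key : ∑ i, Pv i ^ 2 ≤ (r : ℝ) * β ^ 2 + 2 * β * α + α ^ 2 := by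
    have hsplit : ∀ i : Fin r, Pv i ^ 2
        = p i ^ 2 + 2 * p i * (Pv i - p i) + (Pv i - p i) ^ 2 := fun i => by ring
    rw [Finset.sum_congr rfl fun i _ => hsplit i, Finset.sum_add_distrib,
      Finset.sum_add_distrib]
    have hA : ∑ i, p i ^ 2 ≤ (r : ℝ) * β ^ 2 := by
      calc ∑ i : Fin r, p i ^ 2 ≤ ∑ _i : Fin r, β ^ 2 :=
            Finset.sum_le_sum fun i _ => pow_le_pow_left₀ (hp0 i) (hpβ i) 2
        _ = (r : ℝ) * β ^ 2 := by simp [mul_comm]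
    have hB : ∑ i, 2 * p i * (Pv i - p i) ≤ 2 * β * α := by
      calc ∑ i, 2 * p i * (Pv i - p i) ≤ ∑ i, 2 * β * (Pv i - p i) := by
            apply Finset.sum_le_sum
            intro i _
            apply mul_le_mul_of_nonneg_right _ (sub_nonneg.mpr (hp_le i))
            nlinarith [hpβ i]
        _ = 2 * β * α := by rw [← Finset.mul_sum, hxsum]
    have hC : ∑ i, (Pv i - p i) ^ 2 ≤ α ^ 2 := by
      calc ∑ i, (Pv i - p i) ^ 2 ≤ (∑ i, (Pv i - p i)) ^ 2 :=
            Finset.sum_sq_le_sq_sum_of_nonneg fun i _ => sub_nonneg.mpr (hp_le i)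
        _ = α ^ 2 := by rw [hxsum]
    linarith
  have hscore_ge : mscore E P ≥ 1 - (r : ℝ) * β ^ 2 - α * (1 + α + 2 * β) := by
    rw [hscore]
    have heq : ∑ i : Fin r, ((Multiset.card (E.filter fun e => ∀ v ∈ e, v ∈ C i) : ℝ)
          / (Multiset.card E : ℝ)
        - ((mvol E (C i) : ℝ) / (2 * (Multiset.card E : ℝ))) ^ 2)
        = ∑ i, (p i - Pv i ^ 2) := by
      apply Finset.sum_congr rfl
      intro i _
      rw [hp i, hPv]
    rw [heq, Finset.sum_sub_distrib]
    have hpsum : ∑ i, p i = 1 - α := by linarith [hα]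
    rw [hpsum]
    linarith [key]
  -- conclude via sup
  have hle : mscore E P ≤ mmodularity E :=
    le_ciSup (Set.Finite.bddAbove (Set.finite_range (mscore E))) P
  linarith [hscore_ge, hle]
end
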